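/- arXiv:1212.1596 — 4 statements merged into one kernel-verified Lean document; each statement's English description precedes it below -/
import Mathlib

section
/- In a free product Γ, an element γ belongs to S_Γ^c if and only if γⁿ belongs to S_Γ^c for all n ≥ 1. -/
open Monoid

open scoped Classical in
/-- The list of letters of the unique reduced form of an element of a free product. -/
noncomputable def FP.letters {ι : Type*} {G : ι → Type*} [∀ i, Group (G i)]
    (γ : CoprodI G) : List (Σ i, G i) :=
  (CoprodI.Word.equiv (M := G) γ).toList

/-- The word length of an element of a free product. -/
noncomputable def FP.wlen {ι : Type*} {G : ι → Type*} [∀ i, Group (G i)]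
    (γ : CoprodI G) : ℕ :=
  (FP.letters γ).length

/-- An element is cyclically reduced if its reduced form `x₁ ⋯ xₙ` has `n ≤ 1` or
`x₁ ≠ xₙ⁻¹`. -/
noncomputable def FP.CyclicallyReduced {ι : Type*} {G : ι → Type*} [∀ i, Group (G i)]
    (γ : CoprodI G) : Prop :=
  FP.wlen γ ≤ 1 ∨ ∀ h : FP.letters γ ≠ [],
    CoprodI.of ((FP.letters γ).head h).2 ≠ (CoprodI.of (((FP.letters γ).getLast h)).2)⁻¹

namespace FP

open Monoid.CoprodI List

variable {ι : Type*} {G : ι → Type*} [∀ i, Group (G i)]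

open scoped Classical

private lemma len_rcons {i : ι} (p : Word.Pair G i) :
    (Word.rcons p).toList.length ≤ p.tail.toList.length + 1 := by
  rw [Word.rcons]
  split
  · exact Nat.le_succ _
  · simp [Word.cons]

private lemma len_tail_le (i : ι) (w : Word G) :
    (Word.equivPair i w).tail.toList.length ≤ w.toList.length := by
  have h := (Word.equivPair i).symm_apply_apply w
  rw [Word.equivPair_symm] at h
  conv_rhs => rw [← h]
  rw [Word.rcons]
  split
  · exact le_rfl
  · simp [Word.cons]

private lemma len_smul_of {i : ι} (g : G i) (w : Word G) :
    (CoprodI.of g • w).toList.length ≤ w.toList.length + 1 := by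
  rw [Word.of_smul_def]
  exact (len_rcons _).trans (Nat.add_le_add_right (len_tail_le i w) 1)

private lemma len_listprod_smul (L : List (Σ i, G i)) (w : Word G) :
    (((L.map fun x => CoprodI.of x.2).prod) • w).toList.length ≤ L.length + w.toList.length := by
  induction L generalizing w with
  | nil => simp
  | cons x L ih =>
    rw [List.map_cons, List.prod_cons, mul_smul]
    calc (CoprodI.of x.2 • ((L.map fun x => CoprodI.of x.2).prod) • w).toList.length
        ≤ (((L.map fun x => CoprodI.of x.2).prod) • w).toList.length + 1 := len_smul_of _ _
      _ ≤ (L.length + w.toList.length) + 1 := Nat.add_le_add_right (ih w) 1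
      _ = (x :: L).length + w.toList.length := by simp [List.length_cons]; omega

lemma prod_letters (γ : CoprodI G) :
    ((FP.letters γ).map fun x => CoprodI.of x.2).prod = γ :=
  (CoprodI.Word.equiv (M := G)).symm_apply_apply γ

lemma letters_prodw (w : Word G) : FP.letters (Word.prod w) = w.toList :=
  congrArg Word.toList ((CoprodI.Word.equiv (M := G)).apply_symm_apply w)

lemma letters_of_list (L : List (Σ i, G i)) (h1 : ∀ l ∈ L, l.2 ≠ 1)
    (h2 : L.Chain' fun a b => a.1 ≠ b.1) :
    FP.letters ((L.map fun x => CoprodI.of x.2).prod) = L :=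
  letters_prodw ⟨L, h1, h2⟩

lemma wlen_le_length (L : List (Σ i, G i)) :
    FP.wlen ((L.map fun x => CoprodI.of x.2).prod) ≤ L.length := by
  have h := len_listprod_smul L (Word.empty : Word G)
  simpa [FP.wlen, FP.letters, Word.empty, Word.equiv] using h

lemma wlen_mul_le (a b : CoprodI G) : FP.wlen (a * b) ≤ FP.wlen a + FP.wlen b := by
  have h : a * b = (((FP.letters a ++ FP.letters b).map fun x => CoprodI.of x.2)).prod := by
    rw [List.map_append, List.prod_append, prod_letters, prod_letters]
  rw [h]
  simpa [FP.wlen] using wlen_le_length (FP.letters a ++ FP.letters b)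

lemma wlen_of_le {i : ι} (g : G i) : FP.wlen (CoprodI.of g) ≤ 1 := by
  have h := wlen_le_length (G := G) [⟨i, g⟩]
  simpa using h

lemma wlen_pow_le (γ : CoprodI G) (k : ℕ) : FP.wlen (γ ^ k) ≤ k * FP.wlen γ := by
  induction k with
  | zero =>
    have : FP.wlen ((1 : CoprodI G)) ≤ 0 := by
      simpa using wlen_le_length (G := G) []
    simpa using this
  | succ k ih =>
    rw [pow_succ]
    calc FP.wlen (γ ^ k * γ) ≤ FP.wlen (γ ^ k) + FP.wlen γ := wlen_mul_le _ _
      _ ≤ k * FP.wlen γ + FP.wlen γ := Nat.add_le_add_right ih _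
      _ = (k + 1) * FP.wlen γ := by ring

lemma wlen_conj_le {i : ι} (g : G i) (z : CoprodI G) :
    FP.wlen (CoprodI.of g * z * (CoprodI.of g)⁻¹) ≤ FP.wlen z + 2 := by
  calc FP.wlen (CoprodI.of g * z * (CoprodI.of g)⁻¹)
      ≤ FP.wlen (CoprodI.of g * z) + FP.wlen ((CoprodI.of g)⁻¹) := wlen_mul_le _ _
    _ ≤ (FP.wlen (CoprodI.of g) + FP.wlen z) + FP.wlen (CoprodI.of g⁻¹) := by
        rw [← map_inv]; exact Nat.add_le_add_right (wlen_mul_le _ _) _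
    _ ≤ (1 + FP.wlen z) + 1 := by
        have := wlen_of_le g; have := wlen_of_le g⁻¹; omega
    _ = FP.wlen z + 2 := by omega

lemma wlen_one : FP.wlen (1 : CoprodI G) = 0 := by
  have : FP.wlen ((1 : CoprodI G)) ≤ 0 := by simpa using wlen_le_length (G := G) []
  omega

lemma wlen_pow_cyc (L : List (Σ i, G i)) (h1 : ∀ l ∈ L, l.2 ≠ 1)
    (h2 : L.Chain' fun a b => a.1 ≠ b.1) (hne : L ≠ [])
    (hht : (L.getLast hne).1 ≠ (L.head hne).1) (n : ℕ) :
    FP.wlen (((L.map fun x => CoprodI.of x.2).prod) ^ n) = n * L.length := by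
  set J : List (Σ i, G i) := (List.replicate n L).flatten with hJ
  have hprod : ((J.map fun x => CoprodI.of x.2).prod) = ((L.map fun x => CoprodI.of x.2).prod) ^ n := by
    rw [hJ, List.map_flatten, List.map_replicate, List.prod_flatten, List.map_replicate,
      List.prod_replicate]
  have hne1 : ∀ l ∈ J, l.2 ≠ 1 := by
    intro l hl
    rw [hJ, List.mem_flatten] at hl
    obtain ⟨l', hl', hmem⟩ := hl
    rw [List.mem_replicate] at hl'
    exact h1 l (hl'.2 ▸ hmem)
  have hchain : J.Chain' fun a b => a.1 ≠ b.1 := by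
    rcases Nat.eq_zero_or_pos n with rfl | hn
    · simp [hJ, List.Chain']
    · simp only [List.Chain']; rw [hJ, List.isChain_flatten (by simp only [List.mem_replicate, not_and]; exact fun _ e => hne e.symm)]
      constructor
      · intro l hl; rw [List.mem_replicate] at hl; exact hl.2 ▸ h2
      · apply List.isChain_replicate_of_rel
        intro x hx y hy
        rw [List.getLast?_eq_getLast hne, Option.mem_some_iff] at hx
        rw [List.head?_eq_head hne, Option.mem_some_iff] at hy
        rw [← hx, ← hy]
        exact hht
  rw [← hprod, FP.wlen, letters_of_list J hne1 hchain, hJ, List.length_flatten,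
    List.map_replicate, List.sum_replicate, smul_eq_mul]

lemma letters_ne_one (γ : CoprodI G) : ∀ l ∈ FP.letters γ, l.2 ≠ 1 :=
  (CoprodI.Word.equiv (M := G) γ).ne_one

lemma letters_chain' (γ : CoprodI G) : (FP.letters γ).Chain' fun a b => a.1 ≠ b.1 :=
  (CoprodI.Word.equiv (M := G) γ).chain_ne

private lemma conj_pow' (g x : CoprodI G) (k : ℕ) : (g * x * g⁻¹) ^ k = g * x ^ k * g⁻¹ := by
  induction k with
  | zero => simp
  | succ k ih => rw [pow_succ, pow_succ, ih]; group

lemma bounded_of_Q (γ : CoprodI G) (h : ∃ n, 1 ≤ n ∧ FP.wlen (γ ^ n) < n) :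
    ∃ C, ∀ k, FP.wlen (γ ^ k) ≤ C := by
  suffices H : ∀ r : ℕ, ∀ γ : CoprodI G, FP.wlen γ = r →
      (∃ n, 1 ≤ n ∧ FP.wlen (γ ^ n) < n) → ∃ C, ∀ k, FP.wlen (γ ^ k) ≤ C from H _ γ rfl h
  intro r
  induction r using Nat.strong_induction_on with
  | _ r ih =>
  intro γ hr hQ
  by_cases hr1 : r ≤ 1
  · -- short words: γ = 1 or a single letter
    have hγ := prod_letters γ
    refine ⟨1, fun k => ?_⟩
    rcases hL : FP.letters γ with - | ⟨x, L'⟩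
    · rw [hL] at hγ; simp at hγ
      rw [← hγ, one_pow, wlen_one]; omega
    · have hL' : L' = [] := by
        have : FP.wlen γ = L'.length + 1 := by rw [FP.wlen, hL]; simp
        rw [hr] at this
        simpa using List.length_eq_zero_iff.mp (by omega)
      subst hL'
      rw [hL] at hγ; simp at hγ
      rw [← hγ, ← map_pow]
      exact wlen_of_le _
  · -- r ≥ 2
    push_neg at hr1
    have hγ := (prod_letters γ).symm
    have hlen : (FP.letters γ).length = r := hr
    obtain ⟨a, T, hLT⟩ : ∃ a T, FP.letters γ = a :: T := by
      cases hL0 : FP.letters γ with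
      | nil => rw [hL0] at hlen; simp at hlen; omega
      | cons a T => exact ⟨a, T, rfl⟩
    have hT : T ≠ [] := by
      rintro rfl; rw [hLT] at hlen; simp at hlen; omega
    obtain ⟨mid, b, hTm⟩ : ∃ mid b, T = mid ++ [b] :=
      ⟨T.dropLast, T.getLast hT, (List.dropLast_append_getLast hT).symm⟩
    have hL : FP.letters γ = a :: (mid ++ [b]) := by rw [hLT, hTm]
    have hmidlen : mid.length + 2 = r := by rw [hL] at hlen; simpa using hlen
    have hne : FP.letters γ ≠ [] := by rw [hL]; simp
    have hhead : (FP.letters γ).head hne = a := by simp [hL]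
    have hlast : (FP.letters γ).getLast hne = b := by
      have h1 : (FP.letters γ).getLast? = some ((FP.letters γ).getLast hne) :=
        List.getLast?_eq_getLast hne
      have h2 : (FP.letters γ).getLast? = some b := by
        rw [hL, show a :: (mid ++ [b]) = (a :: mid) ++ [b] by simp]
        exact List.getLast?_concat
      exact Option.some_injective _ (h1.symm.trans h2)
    have hchain := letters_chain' γ
    have hneone := letters_ne_one γ
    by_cases hib : b.1 = a.1
    · -- ends in the same factor
      obtain ⟨i, a2⟩ := a
      obtain ⟨j, b2⟩ := b
      simp only at hib
      subst hib
      -- mid is nonempty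
      have hmid : mid ≠ [] := by
        rintro rfl
        rw [hL] at hchain
        simp [List.Chain', List.isChain_cons_cons] at hchain
      -- γ = of a2 * μ * of b2
      set μ : CoprodI G := (mid.map fun x => CoprodI.of x.2).prod with hμ
      have hγ2 : γ = CoprodI.of a2 * μ * CoprodI.of b2 := by
        rw [hγ, hL]
        simp [hμ, List.map_append, List.prod_append, mul_assoc]
      by_cases hone : b2 * a2 = 1
      · -- cyclic reduction: conjugate to μ
        have hγ' : CoprodI.of b2 * γ * (CoprodI.of b2)⁻¹ = μ := by
          rw [hγ2]
          have : CoprodI.of b2 * CoprodI.of a2 = 1 := by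
            rw [← map_mul, hone, map_one]
          group
          rw [← map_mul, hone, map_one, one_mul]
        have hwl : FP.wlen μ < r := by
          have := wlen_le_length mid
          rw [← hμ] at this
          omega
        have hQ' : ∃ n, 1 ≤ n ∧ FP.wlen (μ ^ n) < n := by
          obtain ⟨n, hn1, hn⟩ := hQ
          refine ⟨3 * n, by omega, ?_⟩
          have e : μ ^ (3 * n) = CoprodI.of b2 * γ ^ (3 * n) * (CoprodI.of b2)⁻¹ := by
            rw [← hγ', conj_pow']
          rw [e]
          calc FP.wlen (CoprodI.of b2 * γ ^ (3 * n) * (CoprodI.of b2)⁻¹)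
              ≤ FP.wlen (γ ^ (3 * n)) + 2 := wlen_conj_le _ _
            _ ≤ 3 * FP.wlen (γ ^ n) + 2 := by
                rw [show 3 * n = n * 3 by ring, pow_mul]
                have := wlen_pow_le (γ ^ n) 3
                omega
            _ < 3 * n := by omega
        obtain ⟨C, hC⟩ := ih (FP.wlen μ) (by omega) μ rfl hQ'
        refine ⟨C + 2, fun k => ?_⟩
        have e : γ ^ k = CoprodI.of b2⁻¹ * μ ^ k * (CoprodI.of b2⁻¹)⁻¹ := by
          rw [map_inv, inv_inv, ← hγ', conj_pow']
          group
        rw [e]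
        exact (wlen_conj_le _ _).trans (by have := hC k; omega)
      · -- cyclically reduced after one twist: contradiction
        exfalso
        set M' : List (Σ i, G i) := mid ++ [⟨j, b2 * a2⟩] with hM'
        have hM'ne : M' ≠ [] := by simp [hM']
        have hδ : ((M'.map fun x => CoprodI.of x.2).prod) = μ * CoprodI.of (b2 * a2) := by
          simp [hM', List.map_append, List.prod_append, hμ]
        have hmidmem : ∀ l ∈ mid, l ∈ FP.letters γ := by
          intro l hl; rw [hL]; simp [hl]
        have hne1 : ∀ l ∈ M', l.2 ≠ 1 := by
          intro l hl
          rw [hM', List.mem_append] at hl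
          rcases hl with hl | hl
          · exact hneone l (hmidmem l hl)
          · simp at hl; subst hl; exact hone
        have hrest : (mid ++ [(⟨j, b2⟩ : Σ i, G i)]).Chain' fun a b => a.1 ≠ b.1 := by
          rw [hL] at hchain; exact hchain.tail
        have hjunc : ∀ x ∈ mid.getLast?, x.1 ≠ j := by
          obtain ⟨-, -, hj⟩ := List.isChain_append.mp hrest
          intro x hx
          exact hj x hx ⟨j, b2⟩ (by simp)
        have hmidchain : mid.Chain' fun a b => a.1 ≠ b.1 :=
          (List.isChain_append.mp hrest).1
        have hchainM' : M'.Chain' fun a b => a.1 ≠ b.1 := by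
          rw [hM']; simp only [List.Chain']; rw [List.isChain_append]
          refine ⟨hmidchain, by simp, ?_⟩
          intro x hx y hy
          simp only [List.head?_cons, Option.mem_some_iff] at hy
          subst hy
          exact hjunc x hx
        have hheadmid : ∀ y ∈ mid.head?, j ≠ y.1 := by
          rw [hL] at hchain; simp only [List.Chain'] at hchain; rw [List.isChain_cons] at hchain
          intro y hy
          exact hchain.1 y (by rwa [List.head?_append_of_ne_nil _ hmid])
        have hheadM' : (M'.getLast hM'ne).1 ≠ (M'.head hM'ne).1 := by
          have h1 : M'.getLast hM'ne = ⟨j, b2 * a2⟩ := by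
            have e1 : M'.getLast? = some (M'.getLast hM'ne) := List.getLast?_eq_getLast hM'ne
            have e2 : M'.getLast? = some ⟨j, b2 * a2⟩ := by rw [hM']; exact List.getLast?_concat
            exact Option.some_injective _ (e1.symm.trans e2)
          have h2 : M'.head? = some (M'.head hM'ne) := List.head?_eq_head hM'ne
          have h3 : M'.head? = mid.head? := by rw [hM']; exact List.head?_append_of_ne_nil _ hmid
          rw [h1]
          exact hheadmid _ (by rw [← h3, h2]; simp)
        obtain ⟨n, hn1, hn⟩ := hQ
        have hpow := wlen_pow_cyc M' hne1 hchainM' hM'ne hheadM' n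
        have hδγ : ((M'.map fun x => CoprodI.of x.2).prod) = (CoprodI.of a2)⁻¹ * γ * CoprodI.of a2 := by
          rw [hδ, hγ2, map_mul]
          group
        have e : ((M'.map fun x => CoprodI.of x.2).prod) ^ n
            = (CoprodI.of a2)⁻¹ * γ ^ n * CoprodI.of a2 := by
          rw [hδγ]
          have := conj_pow' ((CoprodI.of a2)⁻¹) γ n
          simpa using this
        have hb : FP.wlen (((M'.map fun x => CoprodI.of x.2).prod) ^ n) ≤ FP.wlen (γ ^ n) + 2 := by
          rw [e, show (CoprodI.of a2)⁻¹ * γ ^ n * CoprodI.of a2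
            = CoprodI.of a2⁻¹ * γ ^ n * (CoprodI.of a2⁻¹)⁻¹ by rw [map_inv]; group]
          exact wlen_conj_le _ _
        have hmlen : 1 ≤ mid.length := by
          rcases mid with - | ⟨x, xs⟩
          · exact absurd rfl hmid
          · simp
        have hMlen : M'.length = mid.length + 1 := by simp [hM']
        rw [hpow, hMlen] at hb
        have h2n : 2 * n ≤ n * (mid.length + 1) := by nlinarith
        have hn2 : n < 2 := by omega
        interval_cases n
        · rw [pow_one] at hn
          omega
    · -- cyclically reduced with distinct end factors : contradiction with hQ
      exfalso
      obtain ⟨n, hn1, hn⟩ := hQ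
      have := wlen_pow_cyc (FP.letters γ) hneone hchain hne (by rw [hhead, hlast]; exact hib) n
      rw [prod_letters] at this
      rw [this, hlen] at hn
      nlinarith

end FP

/-- `γ ∈ S_Γᶜ` if and only if `γⁿ ∈ S_Γᶜ` for all `n ≥ 1`. -/
theorem FP.mem_compl_S_iff_pow_mem_compl_S {ι : Type*} (G : ι → Type*)
    [∀ i, Group (G i)] [∀ i, Nontrivial (G i)] (γ : CoprodI G) :
    (∃ n : ℕ, 1 ≤ n ∧ FP.wlen (γ ^ n) < n) ↔
      ∀ m : ℕ, 1 ≤ m → ∃ n : ℕ, 1 ≤ n ∧ FP.wlen ((γ ^ m) ^ n) < n := by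
  constructor
  · intro hQ m hm
    obtain ⟨C, hC⟩ := FP.bounded_of_Q γ hQ
    refine ⟨C + 1, by omega, ?_⟩
    rw [← pow_mul]
    exact lt_of_le_of_lt (hC (m * (C + 1))) (by omega)
  · intro h
    obtain ⟨n, hn1, hn⟩ := h 1 le_rfl
    exact ⟨n, hn1, by simpa using hn⟩
end

section
/- In a free product Γ, for any n ≥ 2 and any γ ∈ Γ, the inequality ‖γⁿ‖ < ‖γ‖ holds if and only if γ = α x α⁻¹ for some α ∈ Γ and x ∈ X_Γ with x ≠ e and xⁿ = e. In particular, ‖γⁿ‖ ≥ ‖γ‖ unless γⁿ = e. -/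
open Monoid

namespace FPX

open scoped Classical

variable {ι : Type*} {G : ι → Type*} [∀ i, Group (G i)]

/-- The product of a list of letters. -/
def prodOf (l : List (Σ i, G i)) : CoprodI G := (l.map fun p => CoprodI.of p.2).prod

/-- A list of letters is reduced. -/
def Red (l : List (Σ i, G i)) : Prop :=
  (∀ p ∈ l, p.2 ≠ 1) ∧ l.Chain' (fun p q => p.1 ≠ q.1)

@[simp] lemma prodOf_nil : prodOf ([] : List (Σ i, G i)) = 1 := rfl

@[simp] lemma prodOf_cons (p : Σ i, G i) (l : List (Σ i, G i)) :
    prodOf (p :: l) = CoprodI.of p.2 * prodOf l := by simp [prodOf]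

@[simp] lemma prodOf_append (a b : List (Σ i, G i)) :
    prodOf (a ++ b) = prodOf a * prodOf b := by simp [prodOf]

lemma prodOf_letters (γ : CoprodI G) : prodOf (FP.letters γ) = γ :=
  Equiv.symm_apply_apply CoprodI.Word.equiv γ

lemma red_letters (γ : CoprodI G) : Red (FP.letters γ) :=
  ⟨(CoprodI.Word.equiv (M := G) γ).ne_one, (CoprodI.Word.equiv (M := G) γ).chain_ne⟩

@[simp] lemma letters_one : FP.letters (1 : CoprodI G) = [] := by
  have : CoprodI.Word.equiv (M := G) (1 : CoprodI G) = CoprodI.Word.empty := by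
    have h3 : CoprodI.Word.equiv (M := G) (1:CoprodI G) = (1:CoprodI G) • CoprodI.Word.empty :=
      rfl
    rw [h3, one_smul]
  show (CoprodI.Word.equiv (M := G) ((1 : CoprodI G))).toList = []
  rw [this]; rfl

lemma letters_cons {i : ι} (x : G i) (γ : CoprodI G) (hx : x ≠ 1)
    (h : ∀ p ∈ (FP.letters γ).head?, i ≠ Sigma.fst p) :
    FP.letters (CoprodI.of x * γ) = ⟨i, x⟩ :: FP.letters γ := by
  have hf : (CoprodI.Word.equiv (M := G) γ).fstIdx ≠ some i :=
    CoprodI.Word.fstIdx_ne_iff.mpr h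
  have h2 : CoprodI.Word.equiv (M := G) (CoprodI.of x * γ)
      = CoprodI.of x • CoprodI.Word.equiv (M := G) γ := by
    have h3 : ∀ z : CoprodI G, CoprodI.Word.equiv (M := G) z = z • CoprodI.Word.empty :=
      fun _ => rfl
    rw [h3, h3, mul_smul]
  show (CoprodI.Word.equiv (M := G) (CoprodI.of x * γ)).toList = _
  rw [h2, ← CoprodI.Word.cons_eq_smul (h1 := hf) (h2 := hx)]
  rfl

lemma letters_prodOf : ∀ {l : List (Σ i, G i)}, Red l → FP.letters (prodOf l) = l := by
  intro l
  induction l with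
  | nil => intro _; simp
  | cons p t ih =>
    rintro ⟨h1, h2⟩
    have ht : Red t := ⟨fun q hq => h1 q (List.mem_cons_of_mem _ hq), h2.tail⟩
    have hl := ih ht
    obtain ⟨i, x⟩ := p
    rw [prodOf_cons]
    rw [letters_cons x _ (h1 ⟨i,x⟩ List.mem_cons_self) ?_, hl]
    intro q hq
    rw [hl] at hq
    cases t with
    | nil => simp at hq
    | cons b t' =>
      simp only [List.head?_cons, Option.mem_def, Option.some.injEq] at hq
      subst hq
      exact h2.rel_head

lemma red_append {l1 l2 : List (Σ i, G i)} (h1 : Red l1) (h2 : Red l2)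
    (hj : ∀ x ∈ l1.getLast?, ∀ y ∈ l2.head?, x.1 ≠ Sigma.fst y) : Red (l1 ++ l2) := by
  refine ⟨?_, List.isChain_append.mpr ⟨h1.2, h2.2, hj⟩⟩
  intro p hp
  rcases List.mem_append.mp hp with h | h
  · exact h1.1 p h
  · exact h2.1 p h

lemma Red.sublist {l1 l2 : List (Σ i, G i)} (h : Red l2) (hs : l1 <:+: l2) : Red l1 :=
  ⟨fun p hp => h.1 p (hs.subset hp), h.2.infix hs⟩

/-- reversed inverse of a list of letters -/
def invRev (l : List (Σ i, G i)) : List (Σ i, G i) :=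
  l.reverse.map fun p => ⟨p.1, p.2⁻¹⟩

@[simp] lemma invRev_nil : invRev ([] : List (Σ i, G i)) = [] := rfl

lemma invRev_cons (p : Σ i, G i) (l : List (Σ i, G i)) :
    invRev (p :: l) = invRev l ++ [⟨p.1, p.2⁻¹⟩] := by simp [invRev]

@[simp] lemma length_invRev (l : List (Σ i, G i)) : (invRev l).length = l.length := by
  simp [invRev]

lemma head?_invRev (l : List (Σ i, G i)) :
    (invRev l).head? = l.getLast?.map fun p => ⟨p.1, p.2⁻¹⟩ := by
  simp [invRev, List.head?_reverse]

lemma getLast?_invRev (l : List (Σ i, G i)) :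
    (invRev l).getLast? = l.head?.map fun p => ⟨p.1, p.2⁻¹⟩ := by
  rw [invRev, List.getLast?_map, List.getLast?_reverse]

lemma prodOf_invRev (l : List (Σ i, G i)) : prodOf (invRev l) = (prodOf l)⁻¹ := by
  induction l with
  | nil => simp
  | cons p t ih =>
    rw [invRev_cons, prodOf_append, ih, prodOf_cons]
    simp [mul_inv_rev]

lemma letters_of {i : ι} {x : G i} (hx : x ≠ 1) :
    FP.letters (CoprodI.of x) = [⟨i, x⟩] := by
  have := letters_cons x 1 hx (by simp)
  simpa using this

lemma of_eq_of {i j : ι} {x : G i} {y : G j} (hx : x ≠ 1)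
    (h : CoprodI.of x = CoprodI.of y) : (⟨i, x⟩ : Σ i, G i) = ⟨j, y⟩ := by
  have hy : y ≠ 1 := by
    rintro rfl
    simp only [map_one] at h
    exact hx ((CoprodI.of_injective i) (by simpa using h))
  have := letters_of hx
  rw [h, letters_of hy] at this
  simpa using this.symm

lemma eq_one_of_letters_nil {γ : CoprodI G} (h : FP.letters γ = []) : γ = 1 := by
  have := prodOf_letters γ
  rw [h] at this
  simpa using this.symm


/-- cyclically reduced condition at list level -/
def CRl (d : List (Σ i, G i)) : Prop :=
  d.length ≤ 1 ∨ ∀ h : d ≠ [],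
    CoprodI.of (d.head h).2 ≠ (CoprodI.of (d.getLast h).2)⁻¹

lemma decomp_aux : ∀ (n : ℕ) (l : List (Σ i, G i)), l.length ≤ n → Red l →
    ∃ a d : List (Σ i, G i), l = a ++ d ++ invRev a ∧ CRl d := by
  intro n
  induction n with
  | zero =>
    intro l hn _
    refine ⟨[], l, by simp, Or.inl ?_⟩
    omega
  | succ n ih =>
    intro l hn hred
    by_cases hcr : CRl l
    · exact ⟨[], l, by simp, hcr⟩
    · rw [CRl] at hcr
      push_neg at hcr
      obtain ⟨hlen, hne, heq⟩ := hcr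
      -- l = p :: m ++ [q]
      obtain ⟨p, t, rfl⟩ : ∃ p t, l = p :: t := by
        cases l with
        | nil => exact absurd rfl hne
        | cons p t => exact ⟨p, t, rfl⟩
      obtain ⟨m, q, rfl⟩ : ∃ m q, t = m ++ [q] := by
        rcases List.eq_nil_or_concat t with h | ⟨m, q, h⟩
        · subst h; simp at hlen
        · exact ⟨m, q, by simpa [List.concat_eq_append] using h⟩
      have hhead : (p :: (m ++ [q])).head hne = p := rfl
      have hlast : (p :: (m ++ [q])).getLast hne = q := by
        have h5 : (p :: (m ++ [q])).getLast? = some q := by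
          rw [← List.cons_append, List.getLast?_concat]
        have h6 := (List.getLast?_eq_getLast hne).symm.trans h5
        exact Option.some_injective _ h6
      rw [hhead, hlast] at heq
      have hp1 : p.2 ≠ 1 := hred.1 p List.mem_cons_self
      have heq2 : CoprodI.of p.2 = CoprodI.of (q.2⁻¹) := by
        rw [heq, ← map_inv]
      have hpq : (⟨p.1, p.2⟩ : Σ i, G i) = ⟨q.1, q.2⁻¹⟩ := of_eq_of hp1 heq2
      have hq : q = ⟨p.1, p.2⁻¹⟩ := by
        obtain ⟨i, x⟩ := p
        obtain ⟨j, y⟩ := q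
        obtain ⟨rfl, h2⟩ := Sigma.mk.inj_iff.mp hpq
        have : x = y⁻¹ := eq_of_heq h2
        simp [this]
      have hm : Red m :=
        hred.sublist ⟨[p], [q], by simp⟩
      have hmlen : m.length ≤ n := by
        have := hn
        simp only [List.length_cons, List.length_append, List.length_singleton] at this
        omega
      obtain ⟨a', d, hdec, hcrd⟩ := ih m hmlen hm
      refine ⟨p :: a', d, ?_, hcrd⟩
      rw [invRev_cons]
      rw [show (⟨p.1, p.2⁻¹⟩ : Σ i, G i) = q from hq.symm]
      rw [hdec]
      simp

lemma decomp (γ : CoprodI G) :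
    ∃ a d : List (Σ i, G i), FP.letters γ = a ++ d ++ invRev a ∧ CRl d :=
  decomp_aux (FP.letters γ).length _ le_rfl (red_letters γ)


lemma red_replace {a d E : List (Σ i, G i)} (h : Red (a ++ d ++ invRev a)) (hE : Red E)
    (hh : E.head?.map Sigma.fst = d.head?.map Sigma.fst)
    (hl : E.getLast?.map Sigma.fst = d.getLast?.map Sigma.fst) :
    Red (a ++ E ++ invRev a) := by
  rcases eq_or_ne d [] with rfl | hd
  · have hE0 : E = [] := by
      simp only [List.head?_nil, Option.map_none, Option.map_eq_none_iff] at hh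
      exact List.head?_eq_none_iff.mp hh
    subst hE0
    exact h
  · have hEne : E ≠ [] := by
      intro h0
      subst h0
      simp only [List.head?_nil, Option.map_none] at hh
      exact hd (List.head?_eq_none_iff.mp (Option.map_eq_none_iff.mp hh.symm))
    have hmem : ∀ p ∈ a ++ E ++ invRev a, p.2 ≠ 1 := by
      intro p hp
      simp only [List.mem_append] at hp
      rcases hp with (hp | hp) | hp
      · exact h.1 p (by simp [hp])
      · exact hE.1 p hp
      · exact h.1 p (by simp [hp])
    refine ⟨hmem, ?_⟩
    have hch := h.2
    simp only [List.Chain'] at hch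
    rw [List.isChain_append] at hch
    obtain ⟨hc1, hcv, hj2⟩ := hch
    rw [List.isChain_append] at hc1
    obtain ⟨hca, _, hj1⟩ := hc1
    simp only [List.Chain']
    rw [List.isChain_append, List.isChain_append]
    refine ⟨⟨hca, hE.2, ?_⟩, hcv, ?_⟩
    · intro x hx y hy
      have h7 : d.head?.map Sigma.fst = some y.1 := by
        rw [← hh, show E.head? = some y from hy]
        rfl
      obtain ⟨y', hy', hfst⟩ := Option.map_eq_some_iff.mp h7
      have := hj1 x hx y' hy'
      rw [← hfst]
      exact this
    · intro x hx y hy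
      obtain ⟨e, he⟩ : ∃ e, E.getLast? = some e :=
        ⟨E.getLast hEne, List.getLast?_eq_getLast hEne⟩
      have hx' : e = x := by
        rw [List.getLast?_append, he] at hx
        simpa using hx
      have h7 : d.getLast?.map Sigma.fst = some e.1 := by
        rw [← hl, he]; rfl
      obtain ⟨e', he', hfst⟩ := Option.map_eq_some_iff.mp h7
      have h8 : e' ∈ (a ++ d).getLast? := by
        rw [List.getLast?_append, he']; rfl
      have := hj2 e' h8 y hy
      rw [← hx', ← hfst]
      exact this

lemma red_singleton {i : ι} {x : G i} (hx : x ≠ 1) : Red [⟨i, x⟩] :=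
  ⟨by simpa using hx, List.isChain_singleton _⟩

lemma pow_red {d : List (Σ i, G i)} (hd : Red d) (h2 : 2 ≤ d.length)
    (hcr : ∀ h : d ≠ [], CoprodI.of (d.head h).2 ≠ (CoprodI.of (d.getLast h).2)⁻¹)
    {n : ℕ} (hn : 2 ≤ n) :
    ∃ E : List (Σ i, G i), prodOf E = (prodOf d)^n ∧ Red E ∧
      E.head?.map Sigma.fst = d.head?.map Sigma.fst ∧
      E.getLast?.map Sigma.fst = d.getLast?.map Sigma.fst ∧ d.length < E.length := by
  obtain ⟨k, rfl⟩ : ∃ k, n = k + 2 := ⟨n - 2, by omega⟩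
  have hdne : d ≠ [] := by intro h0; subst h0; simp at h2
  obtain ⟨p, hp⟩ : ∃ p, d.head? = some p := ⟨d.head hdne, List.head?_eq_head hdne⟩
  obtain ⟨q, hq⟩ : ∃ q, d.getLast? = some q :=
    ⟨d.getLast hdne, List.getLast?_eq_getLast hdne⟩
  have hcr2 : CoprodI.of p.2 ≠ (CoprodI.of q.2)⁻¹ := by
    have h5 : d.head hdne = p := by
      have := (List.head?_eq_head hdne).symm.trans hp
      exact Option.some_injective _ this
    have h6 : d.getLast hdne = q := by
      have := (List.getLast?_eq_getLast hdne).symm.trans hq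
      exact Option.some_injective _ this
    rw [← h5, ← h6]
    exact hcr hdne
  by_cases hij : q.1 = p.1
  · -- same summand at the two ends
    obtain ⟨p', t, rfl⟩ : ∃ p' t, d = p' :: t := by
      cases d with
      | nil => exact absurd rfl hdne
      | cons p' t => exact ⟨p', t, rfl⟩
    obtain ⟨m, q', rfl⟩ : ∃ m q', t = m ++ [q'] := by
      rcases List.eq_nil_or_concat t with h | ⟨m, q', h⟩
      · subst h; simp at h2
      · exact ⟨m, q', by simpa [List.concat_eq_append] using h⟩
    obtain ⟨i, x⟩ := p'
    obtain ⟨j, y⟩ := q'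
    have hp2 : p = ⟨i, x⟩ := by
      simp only [List.head?_cons, Option.some.injEq] at hp
      exact hp.symm
    have hq2 : q = ⟨j, y⟩ := by
      have h9 : ((⟨i,x⟩ :: (m ++ [⟨j,y⟩])) : List (Σ i, G i)).getLast? = some ⟨j,y⟩ := by
        rw [← List.cons_append, List.getLast?_concat]
      rw [h9] at hq
      exact Option.some_injective _ hq.symm
    rw [hp2] at hcr2 hij
    rw [hq2] at hcr2 hij
    have hij' : j = i := hij
    subst hij'
    rename' j => i
    -- m is nonempty
    have hmne : m ≠ [] := by
      rintro rfl
      have := hd.2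
      simp only [List.nil_append] at this
      exact (List.isChain_cons_cons.mp this).1 rfl
    obtain ⟨m0, hm0⟩ : ∃ m0, m.head? = some m0 :=
      ⟨m.head hmne, List.head?_eq_head hmne⟩
    have hz : y * x ≠ 1 := by
      intro h0
      apply hcr2
      have hxy : x = y⁻¹ := by rw [← inv_mul_cancel_left y x, h0, mul_one]
      rw [hxy, map_inv]
    -- chain facts
    have hxm : Red (⟨i,x⟩ :: m) := hd.sublist ⟨[], [(⟨i, y⟩ : Σ i, G i)], by simp⟩
    have hlast_xm : ∀ e ∈ (⟨i,x⟩ :: m).getLast?, e.1 ≠ i := by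
      have hch := hd.2
      simp only [List.Chain'] at hch
      rw [← List.cons_append, List.isChain_append] at hch
      intro e he
      exact hch.2.2 e he ⟨i, y⟩ rfl
    have hhead_m : ∀ e ∈ m.head?, (i : ι) ≠ e.1 := by
      have hch := (List.isChain_cons.mp hd.2).1
      intro e he
      apply hch
      rw [List.head?_append, he]
      rfl
    have hrest_head : ∀ k', ((List.replicate k' (m ++ [(⟨i, y * x⟩ : Σ i, G i)])).flatten
        ++ (m ++ [(⟨i, y⟩ : Σ i, G i)])).head? = some m0 := by
      intro k'
      induction k' with
      | zero => simp [hm0]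
      | succ k' ih =>
        rw [List.replicate_succ, List.flatten_cons, List.append_assoc, List.head?_append,
          List.head?_append, hm0]
        rfl
    have key : ∀ k', prodOf (⟨i,x⟩ :: ((List.replicate k' (m ++ [(⟨i, y * x⟩ : Σ i, G i)])).flatten
          ++ (m ++ [(⟨i, y⟩ : Σ i, G i)]))) = (prodOf (⟨i,x⟩ :: (m ++ [(⟨i, y⟩ : Σ i, G i)])))^(k'+1)
        ∧ Red (⟨i,x⟩ :: ((List.replicate k' (m ++ [(⟨i, y * x⟩ : Σ i, G i)])).flatten
          ++ (m ++ [(⟨i, y⟩ : Σ i, G i)]))) := by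
      intro k'
      induction k' with
      | zero => exact ⟨(pow_one _).symm, hd⟩
      | succ k' ih =>
        obtain ⟨ih1, ih2⟩ := ih
        have hrew : (List.replicate (k'+1) (m ++ [(⟨i, y * x⟩ : Σ i, G i)])).flatten ++ (m ++ [(⟨i, y⟩ : Σ i, G i)])
            = (m ++ [(⟨i, y * x⟩ : Σ i, G i)]) ++ ((List.replicate k' (m ++ [(⟨i, y * x⟩ : Σ i, G i)])).flatten
              ++ (m ++ [(⟨i, y⟩ : Σ i, G i)])) := by
          rw [List.replicate_succ, List.flatten_cons, List.append_assoc]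
        constructor
        · rw [hrew]
          have ih1' : prodOf ((List.replicate k' (m ++ [(⟨i, y * x⟩ : Σ i, G i)])).flatten ++ (m ++ [(⟨i, y⟩ : Σ i, G i)]))
              = (CoprodI.of x)⁻¹ * (prodOf (⟨i,x⟩ :: (m ++ [(⟨i, y⟩ : Σ i, G i)])))^(k'+1) := by
            rw [← ih1, prodOf_cons, inv_mul_cancel_left]
          have hblock : prodOf (m ++ [(⟨i, y * x⟩ : Σ i, G i)])
              = prodOf (m ++ [(⟨i, y⟩ : Σ i, G i)]) * CoprodI.of x := by
            rw [prodOf_append, prodOf_append]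
            simp [mul_assoc]
          rw [prodOf_cons, prodOf_append, ih1', hblock]
          rw [pow_succ' (prodOf (⟨i,x⟩ :: (m ++ [(⟨i, y⟩ : Σ i, G i)]))) (k'+1)]
          rw [prodOf_cons (⟨i,x⟩ : Σ i, G i) (m ++ [(⟨i, y⟩ : Σ i, G i)])]
          simp only [mul_assoc, mul_inv_cancel_left]
        · rw [hrew]
          have hlist : (⟨i,x⟩ :: ((m ++ [(⟨i, y * x⟩ : Σ i, G i)]) ++ ((List.replicate k' (m ++ [(⟨i, y * x⟩ : Σ i, G i)])).flatten
              ++ (m ++ [(⟨i, y⟩ : Σ i, G i)])))) = (⟨i,x⟩ :: m) ++ ([(⟨i, y * x⟩ : Σ i, G i)]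
              ++ ((List.replicate k' (m ++ [(⟨i, y * x⟩ : Σ i, G i)])).flatten ++ (m ++ [(⟨i, y⟩ : Σ i, G i)]))) := by
            simp
          rw [hlist]
          have hrest : Red ((List.replicate k' (m ++ [(⟨i, y * x⟩ : Σ i, G i)])).flatten ++ (m ++ [(⟨i, y⟩ : Σ i, G i)])) :=
            ih2.sublist ⟨[⟨i,x⟩], [], by simp⟩
          refine red_append hxm (red_append (red_singleton hz) hrest ?_) ?_
          · intro e he y' hy'
            have he' : e = (⟨i, y * x⟩ : Σ i, G i) := by
              have := he
              simp only [List.getLast?_singleton, Option.mem_def, Option.some.injEq] at this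
              exact this.symm
            rw [hrest_head k'] at hy'
            have hy'' : m0 = y' := by simpa using hy'
            rw [he', ← hy'']
            exact hhead_m m0 hm0
          · intro e he y' hy'
            have hy'' : y' = (⟨i, y * x⟩ : Σ i, G i) := by
              rw [List.head?_append] at hy'
              simp only [List.head?_cons] at hy'
              exact (Option.some_injective _ hy').symm
            rw [hy'']
            exact hlast_xm e he
    obtain ⟨key1, key2⟩ := key (k + 1)
    refine ⟨⟨i,x⟩ :: ((List.replicate (k+1) (m ++ [(⟨i, y * x⟩ : Σ i, G i)])).flatten ++ (m ++ [(⟨i, y⟩ : Σ i, G i)])),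
      key1, key2, by simp, ?_, ?_⟩
    · have hgl : (⟨i,x⟩ :: ((List.replicate (k+1) (m ++ [(⟨i, y * x⟩ : Σ i, G i)])).flatten
          ++ (m ++ [(⟨i, y⟩ : Σ i, G i)]))).getLast? = some ⟨i, y⟩ := by
        rw [show (⟨i,x⟩ :: ((List.replicate (k+1) (m ++ [(⟨i, y * x⟩ : Σ i, G i)])).flatten
          ++ (m ++ [(⟨i, y⟩ : Σ i, G i)]))) = (⟨i,x⟩ :: ((List.replicate (k+1) (m ++ [(⟨i, y * x⟩ : Σ i, G i)])).flatten
          ++ m)) ++ [(⟨i, y⟩ : Σ i, G i)] by simp, List.getLast?_concat]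
      rw [hgl, hq, hq2]
    · have hjoin : ((List.replicate (k+1) (m ++ [(⟨i, y * x⟩ : Σ i, G i)])).flatten).length
          = (k+1) * (m.length + 1) := by
        simp [List.length_flatten, List.map_replicate, List.sum_replicate, smul_eq_mul]
      have hpos : 0 < (k+1) * (m.length + 1) := Nat.mul_pos (by omega) (by omega)
      simp only [List.length_cons, List.length_append, List.length_singleton, hjoin]
      omega
  · -- different summands at the two ends
    have key : ∀ k', prodOf ((List.replicate k' d).flatten ++ d) = (prodOf d)^(k'+1) ∧
        Red ((List.replicate k' d).flatten ++ d) ∧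
        ((List.replicate k' d).flatten ++ d).head? = some p := by
      intro k'
      induction k' with
      | zero => exact ⟨(pow_one _).symm, hd, hp⟩
      | succ k' ih =>
        obtain ⟨ih1, ih2, ih3⟩ := ih
        have hrew : (List.replicate (k'+1) d).flatten ++ d
            = d ++ ((List.replicate k' d).flatten ++ d) := by
          rw [List.replicate_succ, List.flatten_cons, List.append_assoc]
        refine ⟨?_, ?_, ?_⟩
        · rw [hrew, prodOf_append, ih1]
          exact (pow_succ' _ _).symm
        · rw [hrew]
          refine red_append hd ih2 ?_
          intro e he y' hy'
          have he' : q = e := by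
            rw [hq] at he
            simpa using he
          rw [ih3] at hy'
          have hy'' : p = y' := by simpa using hy'
          rw [← he', ← hy'']
          exact hij
        · rw [hrew, List.head?_append, hp]
          rfl
    obtain ⟨key1, key2, key3⟩ := key (k + 1)
    refine ⟨(List.replicate (k+1) d).flatten ++ d, key1, key2, by rw [key3, hp], ?_, ?_⟩
    · rw [List.getLast?_append, hq]
      rfl
    · have hjoin : ((List.replicate (k+1) d).flatten).length = (k+1) * d.length := by
        simp [List.length_flatten, List.map_replicate, List.sum_replicate, smul_eq_mul]
      have hpos : 0 < (k+1) * d.length := Nat.mul_pos (by omega) (by omega)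
      simp only [List.length_append, hjoin]
      omega


@[simp] lemma wlen_one : FP.wlen (1 : CoprodI G) = 0 := by
  rw [FP.wlen, letters_one]
  rfl

end FPX

open Monoid

/-- For `n ≥ 2`, `‖γⁿ‖ < ‖γ‖` iff `γ = α x α⁻¹` for a non-trivial letter `x` with `xⁿ = e`.
In particular `‖γⁿ‖ ≥ ‖γ‖` unless `γⁿ = e`. -/
theorem FP.wlen_pow_lt_iff {ι : Type*} (G : ι → Type*)
    [∀ i, Group (G i)] [∀ i, Nontrivial (G i)] (n : ℕ) (hn : 2 ≤ n) (γ : CoprodI G) :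
    (FP.wlen (γ ^ n) < FP.wlen γ ↔
      ∃ (α : CoprodI G) (i : ι) (x : G i), x ≠ 1 ∧ x ^ n = 1 ∧
        γ = α * CoprodI.of x * α⁻¹) ∧
    (γ ^ n ≠ 1 → FP.wlen γ ≤ FP.wlen (γ ^ n)) := by
  obtain ⟨a, d, hdec, hcrd⟩ := FPX.decomp γ
  have hred : FPX.Red (a ++ d ++ FPX.invRev a) := by rw [← hdec]; exact FPX.red_letters γ
  have hγ : γ = FPX.prodOf a * FPX.prodOf d * (FPX.prodOf a)⁻¹ := by
    conv_lhs => rw [← FPX.prodOf_letters γ]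
    rw [hdec, FPX.prodOf_append, FPX.prodOf_append, FPX.prodOf_invRev]
  have hwlen : FP.wlen γ = a.length + d.length + a.length := by
    rw [FP.wlen, hdec]
    simp only [List.length_append, FPX.length_invRev]
  have hconj : ∀ (α : CoprodI G) (i : ι) (x : G i), x ^ n = 1 →
      γ = α * CoprodI.of x * α⁻¹ → γ ^ n = 1 := by
    intro α i x hxn h3
    rw [h3, conj_pow, ← map_pow, hxn, map_one, mul_one, mul_inv_cancel]
  have hletters : ∀ E : List (Σ i, G i), FPX.Red E →
      E.head?.map Sigma.fst = d.head?.map Sigma.fst →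
      E.getLast?.map Sigma.fst = d.getLast?.map Sigma.fst →
      FPX.prodOf E = (FPX.prodOf d) ^ n →
      FP.letters (γ ^ n) = a ++ E ++ FPX.invRev a := by
    intro E hE hh hl hprod
    have h9 : γ ^ n = FPX.prodOf (a ++ E ++ FPX.invRev a) := by
      rw [hγ, conj_pow, ← hprod, FPX.prodOf_append, FPX.prodOf_append, FPX.prodOf_invRev]
    rw [h9]
    exact FPX.letters_prodOf (FPX.red_replace hred hE hh hl)
  rcases d with _ | ⟨⟨i0, x0⟩, d'⟩
  · -- d = [], γ = 1
    have hγ1 : γ = 1 := by rw [hγ]; simp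
    have hone : γ ^ n = γ := by rw [hγ1, one_pow]
    refine ⟨⟨?_, ?_⟩, ?_⟩
    · intro h
      rw [hone] at h
      exact absurd h (lt_irrefl _)
    · rintro ⟨α, i, x, hx1, -, h3⟩
      exfalso
      apply hx1
      have h5 : α * CoprodI.of x * α⁻¹ = 1 := by rw [← h3, hγ1]
      rw [mul_inv_eq_one] at h5
      have h6 : CoprodI.of x = 1 := mul_eq_left.mp h5
      exact (CoprodI.of_injective i) (by rw [h6, map_one])
    · intro h
      rw [hone]
  rcases d' with _ | ⟨p2, d''⟩
  · -- d = [⟨i0, x0⟩]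
    have hx0 : x0 ≠ 1 := hred.1 ⟨i0, x0⟩ (by simp)
    have hd1 : FPX.prodOf [(⟨i0, x0⟩ : Σ i, G i)] = CoprodI.of x0 := by simp
    have hγ2 : γ = FPX.prodOf a * CoprodI.of x0 * (FPX.prodOf a)⁻¹ := by rw [hγ, hd1]
    by_cases hxn : x0 ^ n = 1
    · have hγn : γ ^ n = 1 := hconj _ i0 x0 hxn hγ2
      refine ⟨⟨?_, ?_⟩, ?_⟩
      · intro _
        exact ⟨_, i0, x0, hx0, hxn, hγ2⟩
      · intro _
        rw [hγn, FPX.wlen_one, hwlen]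
        simp only [List.length_singleton]
        omega
      · intro h
        exact absurd hγn h
    · have hE := hletters [(⟨i0, x0 ^ n⟩ : Σ i, G i)] (FPX.red_singleton hxn)
        (by simp) (by simp) (by simp [map_pow])
      have hwn : FP.wlen (γ ^ n) = a.length + 1 + a.length := by
        rw [FP.wlen, hE]
        simp only [List.length_append, FPX.length_invRev, List.length_singleton]
      have hne : γ ^ n ≠ 1 := by
        intro h0
        rw [h0, FPX.letters_one] at hE
        have h9 := congrArg List.length hE
        simp only [List.length_nil, List.length_append, FPX.length_invRev,
          List.length_singleton] at h9
        omega
      refine ⟨⟨?_, ?_⟩, ?_⟩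
      · intro h
        rw [hwn, hwlen] at h
        simp only [List.length_singleton] at h
        omega
      · rintro ⟨α, i, x, h1, h2', h3⟩
        exact absurd (hconj α i x h2' h3) hne
      · intro _
        rw [hwn, hwlen]
        simp only [List.length_singleton]
        omega
  · -- d has length ≥ 2
    have h2 : 2 ≤ (⟨i0, x0⟩ :: (p2 :: d'') : List (Σ i, G i)).length := by
      simp only [List.length_cons]
      omega
    have hcr : ∀ h : (⟨i0, x0⟩ :: (p2 :: d'') : List (Σ i, G i)) ≠ [],
        CoprodI.of (((⟨i0, x0⟩ :: (p2 :: d'')) : List (Σ i, G i)).head h).2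
          ≠ (CoprodI.of (((⟨i0, x0⟩ :: (p2 :: d'')) : List (Σ i, G i)).getLast h).2)⁻¹ := by
      rcases hcrd with h | h
      · simp only [List.length_cons] at h
        omega
      · exact h
    have hd : FPX.Red (⟨i0, x0⟩ :: (p2 :: d'')) :=
      hred.sublist ⟨a, FPX.invRev a, rfl⟩
    obtain ⟨E, hprod, hE, hh, hl, hlt⟩ := FPX.pow_red hd h2 hcr hn
    have hL := hletters E hE hh hl hprod
    have hwn : FP.wlen (γ ^ n) = a.length + E.length + a.length := by
      rw [FP.wlen, hL]
      simp only [List.length_append, FPX.length_invRev]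
    have hne : γ ^ n ≠ 1 := by
      intro h0
      rw [h0, FPX.letters_one] at hL
      have h9 := congrArg List.length hL
      simp only [List.length_nil, List.length_append, FPX.length_invRev] at h9
      simp only [List.length_cons] at hlt
      omega
    refine ⟨⟨?_, ?_⟩, ?_⟩
    · intro h
      rw [hwn, hwlen] at h
      simp only [List.length_cons] at h hlt
      omega
    · rintro ⟨α, i, x, h1, h2', h3⟩
      exact absurd (hconj α i x h2' h3) hne
    · intro _
      rw [hwn, hwlen]
      simp only [List.length_cons] at hlt ⊢
      omega
end

section
/- In a free product Γ, the complement of the set F̃_Γ = {γ : ‖γⁿ‖ ≥ ‖γ‖ for all n ≥ 1} equals the set of non-trivial torsion elements of Γ. -/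
open Monoid

namespace FPAux

open Monoid CoprodI List

variable {ι : Type*} {G : ι → Type*} [∀ i, Group (G i)]

open scoped Classical

lemma letters_eq_of_prod {γ : CoprodI G} {w : Word G} (h : w.prod = γ) :
    FP.letters γ = w.toList := by
  have h2 : Word.equiv (M := G) γ = w := by
    rw [← h]
    exact (Word.equiv (M := G)).apply_symm_apply w
  rw [FP.letters, h2]

lemma wlen_eq_of_prod {γ : CoprodI G} {w : Word G} (h : w.prod = γ) :
    FP.wlen γ = w.toList.length := by
  rw [FP.wlen, letters_eq_of_prod h]

lemma prod_mk (l : List (Σ i, G i)) (h1) (h2) :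
    Word.prod (⟨l, h1, h2⟩ : Word G) = (l.map fun x => CoprodI.of x.2).prod := rfl

lemma prod_toList (w : Word G) :
    w.prod = (w.toList.map fun x => CoprodI.of x.2).prod := rfl

lemma prod_letters (γ : CoprodI G) :
    ((FP.letters γ).map fun x => CoprodI.of x.2).prod = γ := by
  have := (Word.equiv (M := G)).symm_apply_apply γ
  rw [FP.letters]
  exact this

lemma eq_one_of_wlen_eq_zero {γ : CoprodI G} (h : FP.wlen γ = 0) : γ = 1 := by
  have h2 : FP.letters γ = [] := List.length_eq_zero_iff.mp h
  have := prod_letters γ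
  rw [h2] at this
  simpa using this.symm

lemma wlen_pos_of_ne_one {γ : CoprodI G} (h : γ ≠ 1) : 0 < FP.wlen γ :=
  Nat.pos_of_ne_zero fun h0 => h (eq_one_of_wlen_eq_zero h0)

lemma wlen_one : FP.wlen (1 : CoprodI G) = 0 := by
  have : (Word.empty : Word G).prod = 1 := Word.prod_empty
  simpa using wlen_eq_of_prod this


lemma head?_append_of_ne_nil (l l' : List (Σ i, G i)) (h : l ≠ []) :
    (l ++ l').head? = l.head? := by
  rw [List.head?_append, List.head?_eq_head h]
  rfl

lemma getLast?_append_of_ne_nil (l l' : List (Σ i, G i)) (h : l' ≠ []) :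
    (l ++ l').getLast? = l'.getLast? := by
  rw [List.getLast?_append, List.getLast?_eq_getLast h]
  rfl

/-- Case A: ends of `w` lie in different factors. -/
lemma pow_auxA (w : Word G) (hne : w.toList ≠ [])
    (hxy : (w.toList.head hne).1 ≠ (w.toList.getLast hne).1) :
    ∀ n, 1 ≤ n → ∃ u : Word G, u.prod = w.prod ^ n ∧
      w.toList.length ≤ u.toList.length ∧
      u.toList.head? = w.toList.head? ∧ u.toList.getLast? = w.toList.getLast? := by
  intro n hn
  induction n with
  | zero => omega
  | succ n ih =>
    rcases Nat.eq_or_lt_of_le hn with h1 | h1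
    · exact ⟨w, by simp [← h1], le_refl _, rfl, rfl⟩
    · obtain ⟨u, hu, hlen, hhead, hlast⟩ := ih (by omega)
      have hune : u.toList ≠ [] := by
        intro h0
        rw [h0] at hhead
        exact hne (List.head?_eq_none_iff.mp hhead.symm)
      refine ⟨⟨u.toList ++ w.toList, ?_, ?_⟩, ?_, ?_, ?_, ?_⟩
      · intro l hl
        rcases List.mem_append.mp hl with h | h
        · exact u.ne_one l h
        · exact w.ne_one l h
      · refine List.isChain_append.mpr ⟨u.chain_ne, w.chain_ne, ?_⟩
        intro p hp q hq
        rw [hlast, List.getLast?_eq_getLast hne] at hp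
        rw [List.head?_eq_head hne] at hq
        cases hp; cases hq
        exact hxy.symm
      · rw [prod_mk, List.map_append, List.prod_append, ← prod_toList, ← prod_toList,
          hu, pow_succ]
      · simp only [List.length_append]
        omega
      · rw [show (⟨u.toList ++ w.toList, _, _⟩ : Word G).toList = u.toList ++ w.toList from rfl,
          head?_append_of_ne_nil _ _ hune, hhead]
      · rw [show (⟨u.toList ++ w.toList, _, _⟩ : Word G).toList = u.toList ++ w.toList from rfl,
          getLast?_append_of_ne_nil _ _ hne]

/-- Case B: ends of `w` lie in the same factor but do not cancel. -/
lemma pow_auxB (w : Word G) {i : ι} {a b : G i} {mid : List (Σ i, G i)}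
    (hw : w.toList = ⟨i, a⟩ :: (mid ++ [⟨i, b⟩])) (hba : b * a ≠ 1) :
    ∀ n, 1 ≤ n → ∃ u : Word G, u.prod = w.prod ^ n ∧
      w.toList.length ≤ u.toList.length ∧
      u.toList.head? = some ⟨i, a⟩ ∧ u.toList.getLast? = some ⟨i, b⟩ := by
  intro n hn
  induction n with
  | zero => omega
  | succ n ih =>
    rcases Nat.eq_or_lt_of_le hn with h1 | h1
    · refine ⟨w, by simp [← h1], le_refl _, ?_, ?_⟩
      · rw [hw]; rfl
      · rw [hw, ← List.cons_append, List.getLast?_concat]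
    · obtain ⟨u, hu, hlen, hhead, hlast⟩ := ih (by omega)
      have hune : u.toList ≠ [] := by
        intro h0; rw [h0] at hhead; simp at hhead
      have hudec : u.toList.dropLast ++ [(⟨i, b⟩ : Σ i, G i)] = u.toList := by
        have := List.dropLast_append_getLast hune
        rw [List.getLast?_eq_getLast hune] at hlast
        rw [(Option.some.injEq _ _).mp hlast] at this
        exact this
      have hmidlen : w.toList.length = mid.length + 2 := by
        rw [hw]; simp
      have hinitne : u.toList.dropLast ≠ [] := by
        intro h0
        have : u.toList.length = 1 := by
          rw [← hudec, h0]; rfl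
        omega
      -- the new list
      refine ⟨⟨u.toList.dropLast ++ (⟨i, b * a⟩ :: (mid ++ [⟨i, b⟩])), ?_, ?_⟩, ?_, ?_, ?_, ?_⟩
      · intro l hl
        rcases List.mem_append.mp hl with h | h
        · exact u.ne_one l (List.mem_of_mem_dropLast h)
        · rcases List.mem_cons.mp h with h | h
          · rw [h]; exact hba
          · exact w.ne_one l (by rw [hw]; exact List.mem_cons_of_mem _ h)
      · refine List.isChain_append.mpr ⟨?_, ?_, ?_⟩
        · have := u.chain_ne
          rw [← hudec] at this
          exact (List.isChain_append.mp this).1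
        · have := w.chain_ne
          rw [hw, List.isChain_cons] at this
          exact List.isChain_cons.mpr ⟨this.1, this.2⟩
        · intro p hp q hq
          have := u.chain_ne
          rw [← hudec] at this
          have hj := (List.isChain_append.mp this).2.2 p hp ⟨i, b⟩ rfl
          cases hq
          exact hj
      · rw [prod_mk, List.map_append, List.prod_append]
        have h2 : ((u.toList.dropLast).map fun x => CoprodI.of x.2).prod
            * CoprodI.of b = u.prod := by
          rw [prod_toList, ← hudec, List.map_append, List.prod_append]
          simp
        have h3 : ((mid ++ [(⟨i, b⟩ : Σ i, G i)]).map fun x => CoprodI.of x.2).prod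
            = (CoprodI.of a)⁻¹ * w.prod := by
          rw [prod_toList, hw]
          simp [mul_assoc]
        simp only [List.map_cons, List.prod_cons]
        rw [h3, map_mul]
        calc ((u.toList.dropLast).map fun x => CoprodI.of x.2).prod *
              (CoprodI.of b * CoprodI.of a * ((CoprodI.of a)⁻¹ * w.prod))
            = (((u.toList.dropLast).map fun x => CoprodI.of x.2).prod * CoprodI.of b)
              * w.prod := by group
          _ = u.prod * w.prod := by rw [h2]
          _ = w.prod ^ (n + 1) := by rw [hu, pow_succ]
      · have h4 : u.toList.dropLast.length + 1 = u.toList.length := by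
          rw [← hudec]; simp
        simp only [List.length_append, List.length_cons]
        simp at hmidlen ⊢
        omega
      · rw [show (⟨u.toList.dropLast ++ (⟨i, b * a⟩ :: (mid ++ [⟨i, b⟩])), _, _⟩ : Word G).toList
            = u.toList.dropLast ++ (⟨i, b * a⟩ :: (mid ++ [⟨i, b⟩])) from rfl,
          head?_append_of_ne_nil _ _ hinitne]
        rw [← hudec, head?_append_of_ne_nil _ _ hinitne] at hhead
        exact hhead
      · rw [List.getLast?_append]
        rw [show (⟨i, b * a⟩ : Σ i, G i) :: (mid ++ [⟨i, b⟩])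
            = ((⟨i, b * a⟩ : Σ i, G i) :: mid) ++ [⟨i, b⟩] from rfl, List.getLast?_concat]
        rfl

lemma pow_ne_one {γ : CoprodI G} (hfin : ¬ IsOfFinOrder γ) {n : ℕ} (hn : 1 ≤ n) :
    γ ^ n ≠ 1 := fun h => hfin (isOfFinOrder_iff_pow_eq_one.mpr ⟨n, hn, h⟩)

lemma key : ∀ (k : ℕ) (γ : CoprodI G), FP.wlen γ ≤ k → ¬ IsOfFinOrder γ → ∀ n, 1 ≤ n →
    FP.wlen γ ≤ FP.wlen (γ ^ n) ∧
    (FP.letters (γ ^ n)).head?.map Sigma.fst = (FP.letters γ).head?.map Sigma.fst ∧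
    (FP.letters (γ ^ n)).getLast?.map Sigma.fst = (FP.letters γ).getLast?.map Sigma.fst := by
  intro k
  induction k with
  | zero =>
    intro γ hγ hfin n hn
    exact absurd (eq_one_of_wlen_eq_zero (Nat.le_zero.mp hγ) ▸ IsOfFinOrder.one) hfin
  | succ k ih =>
    intro γ hγ hfin n hn
    have hγ1 : γ ≠ 1 := fun h => hfin (h ▸ IsOfFinOrder.one)
    have hlne : FP.letters γ ≠ [] := by
      intro h0
      exact hγ1 (eq_one_of_wlen_eq_zero (by rw [FP.wlen, h0]; rfl))
    have hprodl : ((FP.letters γ).map fun x => CoprodI.of x.2).prod = γ := prod_letters γ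
    by_cases hw1 : FP.wlen γ = 1
    · -- single letter
      obtain ⟨x, hx⟩ := List.length_eq_one_iff.mp hw1
      have hγeq : γ = CoprodI.of x.2 := by
        rw [← hprodl, hx]; simp
      have hxn : x.2 ^ n ≠ 1 := by
        intro h
        exact pow_ne_one hfin hn (by rw [hγeq, ← map_pow, h, map_one])
      have hprodu : Word.prod (⟨[⟨x.1, x.2 ^ n⟩], by simpa using hxn,
          List.isChain_singleton _⟩ : Word G) = γ ^ n := by
        rw [prod_mk, hγeq]
        simp [map_pow]
      have hlet : FP.letters (γ ^ n) = [⟨x.1, x.2 ^ n⟩] := letters_eq_of_prod hprodu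
      refine ⟨?_, ?_, ?_⟩
      · rw [FP.wlen, FP.wlen, hlet, hx]
        simp
      · rw [hlet, hx]; rfl
      · rw [hlet, hx]; rfl
    · -- at least two letters
      have hw2 : 2 ≤ (FP.letters γ).length := by
        have hdef : FP.wlen γ = (FP.letters γ).length := rfl
        have h0 : 0 < FP.wlen γ := wlen_pos_of_ne_one hγ1
        omega
      obtain ⟨x, l', hl'⟩ := List.exists_cons_of_ne_nil hlne
      rcases List.eq_nil_or_concat l' with h0 | ⟨mid, y, hmid⟩
      · rw [h0] at hl'; rw [hl'] at hw2; simp at hw2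
      have hl : FP.letters γ = x :: (mid ++ [y]) := by
        rw [hl', hmid, List.concat_eq_append]
      have hheadl : (FP.letters γ).head? = some x := by rw [hl]; rfl
      have hlastl : (FP.letters γ).getLast? = some y := by
        rw [hl, ← List.cons_append, List.getLast?_concat]
      have hchainl : (FP.letters γ).IsChain fun p q => p.1 ≠ q.1 :=
        (Word.equiv (M := G) γ).chain_ne
      have hneonel : ∀ t ∈ FP.letters γ, t.2 ≠ 1 := (Word.equiv (M := G) γ).ne_one
      have hchain2 : (mid ++ [y]).IsChain fun p q => p.1 ≠ q.1 := by
        rw [hl] at hchainl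
        exact (List.isChain_cons.mp hchainl).2
      have hheadcond : ∀ q ∈ (mid ++ [y]).head?, x.1 ≠ q.1 := by
        rw [hl] at hchainl
        exact (List.isChain_cons.mp hchainl).1
      have hjunc : ∀ p ∈ mid.getLast?, p.1 ≠ y.1 := by
        intro p hp
        exact (List.isChain_append.mp hchain2).2.2 p hp y rfl
      have hw0prod : (Word.equiv (M := G) γ).prod = γ := prod_letters γ
      have hw0list : (Word.equiv (M := G) γ).toList = FP.letters γ := rfl
      by_cases hC : CoprodI.of y.2 * CoprodI.of x.2 = 1
      · -- conjugate case
        have hxy : CoprodI.of x.2 = (CoprodI.of y.2)⁻¹ := eq_inv_of_mul_eq_one_right hC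
        have hyx : CoprodI.of y.2 = (CoprodI.of x.2)⁻¹ := by rw [hxy, inv_inv]
        have hmid_ne1 : ∀ t ∈ mid, t.2 ≠ 1 := fun t ht =>
          hneonel t (by rw [hl]; exact List.mem_cons_of_mem _ (List.mem_append_left _ ht))
        have hmidchain : mid.IsChain fun p q => p.1 ≠ q.1 :=
          (List.isChain_append.mp hchain2).1
        have hmprod : Word.prod (⟨mid, hmid_ne1, hmidchain⟩ : Word G)
            = (mid.map fun t => CoprodI.of t.2).prod := prod_mk _ _ _
        set γ' := (mid.map fun t => CoprodI.of t.2).prod with hγ'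
        have hγfact : γ = CoprodI.of x.2 * γ' * (CoprodI.of x.2)⁻¹ := by
          conv_lhs => rw [← hprodl, hl]
          rw [List.map_cons, List.prod_cons, List.map_append, List.prod_append,
            List.map_singleton, List.prod_singleton, hyx, mul_assoc]
        have hmidne : mid ≠ [] := by
          intro h0
          apply hγ1
          rw [hγfact, hγ', h0]
          simp
        have hγ'fin : ¬ IsOfFinOrder γ' := by
          intro h
          obtain ⟨m0, hm0, hm1⟩ := isOfFinOrder_iff_pow_eq_one.mp h
          refine hfin (isOfFinOrder_iff_pow_eq_one.mpr ⟨m0, hm0, ?_⟩)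
          rw [hγfact, conj_pow, hm1, mul_one, mul_inv_cancel]
        have hletters' : FP.letters γ' = mid := letters_eq_of_prod hmprod
        have hwlen' : FP.wlen γ' = mid.length := by rw [FP.wlen, hletters']
        have hwlenγ : FP.wlen γ = mid.length + 2 := by
          rw [FP.wlen, hl]; simp
        have hle : FP.wlen γ' ≤ k := by omega
        obtain ⟨hlen_n, hhead_n, hlast_n⟩ := ih γ' hle hγ'fin n hn
        set u' : Word G := Word.equiv (M := G) (γ' ^ n) with hu'
        have hu'list : u'.toList = FP.letters (γ' ^ n) := rfl
        have hu'prod : u'.prod = γ' ^ n := prod_letters _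
        have hu'ne : u'.toList ≠ [] := by
          intro h0
          apply pow_ne_one hγ'fin hn (γ := γ')
          apply eq_one_of_wlen_eq_zero
          rw [FP.wlen, ← hu'list, h0]
          rfl
        have hmidhead : mid.head? = some (mid.head hmidne) := List.head?_eq_head hmidne
        have hmidlast : mid.getLast? = some (mid.getLast hmidne) :=
          List.getLast?_eq_getLast hmidne
        have hu'head : u'.toList.head? = some (u'.toList.head hu'ne) :=
          List.head?_eq_head hu'ne
        have hu'last : u'.toList.getLast? = some (u'.toList.getLast hu'ne) :=
          List.getLast?_eq_getLast hu'ne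
        have hu'headfst : (u'.toList.head hu'ne).1 = (mid.head hmidne).1 := by
          have := hhead_n
          rw [hletters', ← hu'list, hu'head, hmidhead] at this
          simpa using this
        have hu'lastfst : (u'.toList.getLast hu'ne).1 = (mid.getLast hmidne).1 := by
          have := hlast_n
          rw [hletters', ← hu'list, hu'last, hmidlast] at this
          simpa using this
        have hxheadmid : x.1 ≠ (mid.head hmidne).1 := by
          apply hheadcond
          rw [head?_append_of_ne_nil _ _ hmidne, hmidhead]
          rfl
        have hlastmidy : (mid.getLast hmidne).1 ≠ y.1 := by
          apply hjunc
          rw [hmidlast]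
          rfl
        have hx1 : x.2 ≠ 1 := hneonel x (by rw [hl]; exact List.mem_cons_self)
        have hy1 : y.2 ≠ 1 := hneonel y
          (by rw [hl]; exact List.mem_cons_of_mem _ (List.mem_append_right _ (by simp)))
        have hvne1 : ∀ t ∈ x :: (u'.toList ++ [y]), t.2 ≠ 1 := by
          intro t ht
          rcases List.mem_cons.mp ht with h | h
          · rw [h]; exact hx1
          · rcases List.mem_append.mp h with h | h
            · exact u'.ne_one t h
            · rw [List.mem_singleton.mp h]; exact hy1
        have hvchain : (x :: (u'.toList ++ [y])).IsChain fun p q => p.1 ≠ q.1 := by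
          refine List.isChain_cons.mpr ⟨?_, List.isChain_append.mpr
            ⟨u'.chain_ne, List.isChain_singleton _, ?_⟩⟩
          · intro q hq
            rw [head?_append_of_ne_nil _ _ hu'ne, hu'head] at hq
            cases hq
            rw [hu'headfst]
            exact hxheadmid
          · intro p hp q hq
            rw [hu'last] at hp
            cases hp
            cases hq
            rw [hu'lastfst]
            exact hlastmidy
        have hprodv : Word.prod (⟨x :: (u'.toList ++ [y]), hvne1, hvchain⟩ : Word G)
            = γ ^ n := by
          rw [prod_mk, List.map_cons, List.prod_cons, List.map_append, List.prod_append,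
            List.map_singleton, List.prod_singleton,
            ← prod_toList, hu'prod, hγfact, conj_pow, hyx, mul_assoc]
        have hletv : FP.letters (γ ^ n) = x :: (u'.toList ++ [y]) :=
          letters_eq_of_prod hprodv
        refine ⟨?_, ?_, ?_⟩
        · have h5 : FP.wlen (γ ^ n) = u'.toList.length + 2 := by
            rw [FP.wlen, hletv]
            simp
          have h6 : FP.wlen (γ' ^ n) = u'.toList.length := by rw [FP.wlen, ← hu'list]
          omega
        · rw [hletv, hheadl]; rfl
        · rw [hletv, hlastl, ← List.cons_append, List.getLast?_concat]
      · -- cyclically reduced case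
        by_cases hii : x.1 = y.1
        · -- same factor, non-cancelling: case B
          obtain ⟨i, a⟩ := x
          obtain ⟨j, b⟩ := y
          dsimp at hii
          subst hii
          have hba : b * a ≠ 1 := by
            intro h
            apply hC
            rw [← map_mul, h, map_one]
          obtain ⟨u, hup, hulen, huh, hul⟩ := pow_auxB (Word.equiv (M := G) γ)
            (by rw [hw0list, hl]) hba n hn
          rw [hw0prod] at hup
          have hletu : FP.letters (γ ^ n) = u.toList := letters_eq_of_prod hup
          refine ⟨?_, ?_, ?_⟩
          · rw [FP.wlen, FP.wlen, hletu, ← hw0list]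
            exact hulen
          · rw [hletu, huh, hheadl]
          · rw [hletu, hul, hlastl]
        · -- different factors: case A
          have hlne0 : (Word.equiv (M := G) γ).toList ≠ [] := by rw [hw0list]; exact hlne
          have hhead0 : ((Word.equiv (M := G) γ).toList.head hlne0) = x := by
            have h1 : (Word.equiv (M := G) γ).toList.head? = some x := by
              rw [hw0list]; exact hheadl
            rw [List.head?_eq_head hlne0] at h1
            exact Option.some.inj h1
          have hlast0 : ((Word.equiv (M := G) γ).toList.getLast hlne0) = y := by
            have h1 : (Word.equiv (M := G) γ).toList.getLast? = some y := by
              rw [hw0list]; exact hlastl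
            rw [List.getLast?_eq_getLast hlne0] at h1
            exact Option.some.inj h1
          obtain ⟨u, hup, hulen, huh, hul⟩ := pow_auxA (Word.equiv (M := G) γ) hlne0
            (by rw [hhead0, hlast0]; exact hii) n hn
          rw [hw0prod] at hup
          have hletu : FP.letters (γ ^ n) = u.toList := letters_eq_of_prod hup
          refine ⟨?_, ?_, ?_⟩
          · rw [FP.wlen, FP.wlen, hletu, ← hw0list]
            exact hulen
          · rw [hletu, huh, hw0list]
          · rw [hletu, hul, hw0list]

end FPAux

/-- The complement of `F̃_Γ = {γ : ‖γⁿ‖ ≥ ‖γ‖ for all n ≥ 1}` equals the set of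
non-trivial torsion elements. -/
theorem FP.compl_Ftilde_eq_nontrivial_torsion {ι : Type*} (G : ι → Type*)
    [∀ i, Group (G i)] [∀ i, Nontrivial (G i)] :
    {γ : CoprodI G | ∀ n : ℕ, 1 ≤ n → FP.wlen γ ≤ FP.wlen (γ ^ n)}ᶜ =
      {γ : CoprodI G | IsOfFinOrder γ ∧ γ ≠ 1} := by
  ext γ
  simp only [Set.mem_compl_iff, Set.mem_setOf_eq]
  constructor
  · intro h
    push_neg at h
    obtain ⟨n, hn, hlt⟩ := h
    have hγ1 : γ ≠ 1 := by
      rintro rfl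
      rw [one_pow] at hlt
      exact lt_irrefl _ hlt
    refine ⟨?_, hγ1⟩
    by_contra hfin
    exact absurd (FPAux.key _ γ le_rfl hfin n hn).1 (not_le.mpr hlt)
  · rintro ⟨hfin, hγ1⟩
    push_neg
    refine ⟨orderOf γ, hfin.orderOf_pos, ?_⟩
    rw [pow_orderOf_eq_one, FPAux.wlen_one]
    exact FPAux.wlen_pos_of_ne_one hγ1
end

section
/- For the infinite dihedral group D∞ = ℤ/2 * ℤ/2, one has S^c · S^c = D∞; indeed S^c consists exactly of the identity together with all elements of odd word length. -/
open Monoid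

namespace FPAux

open scoped Classical in
lemma exists_word {ι : Type*} {G : ι → Type*} [∀ i, Group (G i)] (γ : CoprodI G) :
    ∃ w : CoprodI.Word G, FP.letters γ = w.toList ∧ w.prod = γ :=
  ⟨CoprodI.Word.equiv γ, rfl, CoprodI.Word.equiv.symm_apply_apply γ⟩

open scoped Classical in
lemma letters_prod {ι : Type*} {G : ι → Type*} [∀ i, Group (G i)] (w : CoprodI.Word G) :
    FP.letters w.prod = w.toList :=
  congrArg CoprodI.Word.toList (CoprodI.Word.equiv.apply_symm_apply w)

abbrev M : Bool → Type := fun _ => Multiplicative (ZMod 2)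

abbrev D := CoprodI M

/-- the generator -/
def g : Multiplicative (ZMod 2) := Multiplicative.ofAdd 1

lemma eq_g (x : Multiplicative (ZMod 2)) (h : x ≠ 1) : x = g := by revert x; decide

lemma g_ne_one : g ≠ 1 := by decide

lemma g_inv : g⁻¹ = g := by decide

/-- The alternating word of length `n` starting at index `i`. -/
def pattern : Bool → ℕ → List (Σ i, M i)
  | _, 0 => []
  | i, n + 1 => ⟨i, g⟩ :: pattern (!i) n

lemma pattern_length (i : Bool) : ∀ n, (pattern i n).length = n := by
  intro n
  induction n generalizing i with
  | zero => rfl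
  | succ n ih => simp [pattern, ih]

lemma pattern_succ_succ (i : Bool) (n : ℕ) :
    pattern i (n + 2) = ⟨i, g⟩ :: ⟨!i, g⟩ :: pattern i n := by
  show pattern i (n+2) = _
  rw [pattern, pattern, Bool.not_not]

lemma pattern_chain (i : Bool) : ∀ n,
    (pattern i n).Chain' (fun l l' => Sigma.fst l ≠ Sigma.fst l') := by
  intro n
  induction n using Nat.strong_induction_on generalizing i with
  | _ n ih =>
    match n with
    | 0 => exact List.isChain_nil
    | 1 => exact List.isChain_singleton _
    | (n+2) =>
      rw [pattern_succ_succ]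
      show List.IsChain _ _
      rw [List.isChain_cons_cons]
      refine ⟨by simp, ?_⟩
      have : (⟨!i, g⟩ :: pattern i n : List (Σ i, M i)) = pattern (!i) (n+1) := by
        rw [pattern, Bool.not_not]
      rw [this]
      exact ih (n+1) (by omega) (!i)

lemma pattern_ne_one (i : Bool) : ∀ n, ∀ l ∈ pattern i n, Sigma.snd l ≠ 1 := by
  intro n
  induction n generalizing i with
  | zero => simp [pattern]
  | succ n ih =>
    intro l hl
    rw [pattern] at hl
    rcases List.mem_cons.mp hl with h | h
    · subst h; exact g_ne_one
    · exact ih (!i) l h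

/-- the corresponding reduced word -/
def pword (i : Bool) (n : ℕ) : CoprodI.Word M :=
  ⟨pattern i n, pattern_ne_one i n, pattern_chain i n⟩

/-- the element of D given by the alternating word -/
def Pp (i : Bool) (n : ℕ) : D :=
  ((pattern i n).map fun l => CoprodI.of l.snd).prod

lemma pword_prod (i : Bool) (n : ℕ) : (pword i n).prod = Pp i n := rfl

lemma letters_Pp (i : Bool) (n : ℕ) : FP.letters (Pp i n) = pattern i n := by
  rw [← pword_prod, letters_prod]; rfl

lemma wlen_Pp (i : Bool) (n : ℕ) : FP.wlen (Pp i n) = n := by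
  rw [FP.wlen, letters_Pp, pattern_length]

lemma Pp_zero (i : Bool) : Pp i 0 = 1 := rfl

lemma Pp_one (i : Bool) : Pp i 1 = CoprodI.of (M := M) (i := i) g := by
  simp [Pp, pattern]

lemma Pp_cons (i : Bool) (n : ℕ) : Pp i (n + 1) = Pp i 1 * Pp (!i) n := by
  simp [Pp, pattern]

lemma pattern_two_mul_add (i : Bool) (k n : ℕ) :
    pattern i (2 * k + n) = pattern i (2 * k) ++ pattern i n := by
  induction k with
  | zero => simp [pattern]
  | succ k ih =>
    have h1 : 2 * (k + 1) + n = (2 * k + n) + 2 := by omega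
    have h2 : 2 * (k + 1) = 2 * k + 2 := by omega
    rw [h1, h2, pattern_succ_succ, pattern_succ_succ, ih]
    simp

lemma Pp_mul (i : Bool) (k n : ℕ) : Pp i (2 * k) * Pp i n = Pp i (2 * k + n) := by
  unfold Pp
  rw [pattern_two_mul_add, List.map_append, List.prod_append]

lemma Pp_pow (i : Bool) (k : ℕ) : ∀ n, (Pp i (2 * k)) ^ n = Pp i (2 * k * n) := by
  intro n
  induction n with
  | zero => simp [Pp_zero]
  | succ n ih =>
    rw [pow_succ, ih]
    have h1 : 2 * k * n = 2 * (k * n) := by ring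
    have h2 : 2 * k * (n + 1) = 2 * (k * n) + 2 * k := by ring
    rw [h1, h2]
    rw [show (2 : ℕ) * k = 2 * k from rfl]
    have := Pp_mul i (k * n) (2 * k)
    rw [← this]

lemma pattern_snoc (i : Bool) : ∀ n, pattern i (n + 1) =
    pattern i n ++ [⟨if n % 2 = 0 then i else !i, g⟩] := by
  intro n
  induction n generalizing i with
  | zero => simp [pattern]
  | succ n ih =>
    rw [pattern, ih (!i)]
    by_cases h : n % 2 = 0
    · have h2 : (n + 1) % 2 ≠ 0 := by omega
      simp [pattern, h, h2]
    · have h2 : (n + 1) % 2 = 0 := by omega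
      simp [pattern, h, h2]

lemma pattern_reverse (i : Bool) : ∀ n,
    (pattern i n).reverse = pattern (if n % 2 = 0 then !i else i) n := by
  intro n
  induction n generalizing i with
  | zero => rfl
  | succ n ih =>
    rw [pattern, List.reverse_cons, ih (!i), pattern_snoc]
    by_cases h : n % 2 = 0
    · have h2 : (n + 1) % 2 ≠ 0 := by omega
      simp [h, h2]
    · have h2 : (n + 1) % 2 = 0 := by omega
      simp [h, h2]

lemma Pp_inv (i : Bool) (n : ℕ) (hodd : n % 2 = 1) : (Pp i n)⁻¹ = Pp i n := by
  unfold Pp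
  rw [List.prod_inv_reverse, ← List.map_reverse, ← List.map_reverse, pattern_reverse]
  have : (if n % 2 = 0 then !i else i) = i := by simp [hodd]
  rw [this, List.map_map]
  congr 1
  apply List.map_congr_left
  intro l hl
  have : l.snd = g := eq_g _ (pattern_ne_one i n l hl)
  simp only [Function.comp_apply, ← map_inv, this, g_inv]

lemma Pp_sq (i : Bool) (n : ℕ) (hodd : n % 2 = 1) : Pp i n * Pp i n = 1 := by
  nth_rewrite 1 [← Pp_inv i n hodd]
  exact inv_mul_cancel (Pp i n)

lemma bool_flip {a b : Bool} (h : a ≠ b) : b = !a := by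
  revert h; cases a <;> cases b <;> decide

/-- every chain'-ne list of nontrivial letters is an alternating pattern -/
lemma shape : ∀ L : List (Σ i, M i),
    L.Chain' (fun l l' => Sigma.fst l ≠ Sigma.fst l') → (∀ l ∈ L, Sigma.snd l ≠ 1) →
    ∃ i, L = pattern i L.length := by
  intro L
  induction L with
  | nil => exact fun _ _ => ⟨true, rfl⟩
  | cons hd t ih =>
    intro hc hn
    obtain ⟨j, x⟩ := hd
    have hx : x = g := eq_g _ (hn _ List.mem_cons_self)
    obtain ⟨i', ht⟩ := ih hc.tail (fun l hl => hn l (List.mem_cons_of_mem _ hl))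
    cases t with
    | nil => exact ⟨j, by simp [pattern, hx]⟩
    | cons a t' =>
      have hja : j ≠ a.1 := (List.isChain_cons_cons.mp hc).1
      have hhead : a.1 = i' := by
        have : a :: t' = ⟨i', g⟩ :: pattern (!i') t'.length := by
          rw [ht]; rfl
        have := congrArg (fun l => l.headI) this
        simp at this
        rw [this]
      refine ⟨j, ?_⟩
      have hi' : i' = !j := by rw [← hhead]; exact bool_flip hja
      rw [hi'] at ht
      show (⟨j, x⟩ : Σ i, M i) :: a :: t' = pattern j ((a :: t').length + 1)
      rw [pattern, hx]
      exact congrArg (List.cons ⟨j, g⟩) ht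

lemma exists_rep (γ : D) : ∃ i, γ = Pp i (FP.wlen γ) := by
  obtain ⟨w, hl, hp⟩ := exists_word γ
  obtain ⟨i, hi⟩ := shape w.toList w.chain_ne w.ne_one
  refine ⟨i, ?_⟩
  have hm : FP.wlen γ = w.toList.length := by rw [FP.wlen, hl]
  rw [hm, ← hp]
  show (w.toList.map fun l => CoprodI.of l.snd).prod = Pp i w.toList.length
  conv_lhs => rw [hi]
  rfl

lemma wlen_one_s8 : FP.wlen (1 : D) = 0 := by
  rw [← Pp_zero true, wlen_Pp]

/-- membership criterion for S^c -/
lemma mem_compl_of_odd (δ : D) (h : FP.wlen δ % 2 = 1) :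
    ∃ n : ℕ, 1 ≤ n ∧ FP.wlen (δ ^ n) < n := by
  obtain ⟨i, hi⟩ := exists_rep δ
  refine ⟨2, by omega, ?_⟩
  have hsq : δ ^ 2 = 1 := by rw [sq, hi]; exact Pp_sq i _ h
  rw [hsq, wlen_one_s8]; omega

lemma one_mem_compl : ∃ n : ℕ, 1 ≤ n ∧ FP.wlen ((1 : D) ^ n) < n :=
  ⟨1, le_refl 1, by rw [one_pow, wlen_one_s8]; omega⟩

lemma part2 : {γ : D | ∃ n : ℕ, 1 ≤ n ∧ FP.wlen (γ ^ n) < n} =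
    {1} ∪ {γ : D | Odd (FP.wlen γ)} := by
  ext γ
  simp only [Set.mem_setOf_eq, Set.mem_union, Set.mem_singleton_iff]
  constructor
  · rintro ⟨n, hn, hlt⟩
    by_contra hcon
    push_neg at hcon
    obtain ⟨h1, hodd⟩ := hcon
    rw [Nat.odd_iff] at hodd
    obtain ⟨i, hi⟩ := exists_rep γ
    have hm0 : FP.wlen γ ≠ 0 := by
      intro h
      exact h1 (by rw [hi, h, Pp_zero])
    obtain ⟨k, hk, hk1⟩ : ∃ k, FP.wlen γ = 2 * k ∧ 1 ≤ k := ⟨FP.wlen γ / 2, by omega, by omega⟩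
    have : FP.wlen (γ ^ n) = 2 * k * n := by rw [hi, hk, Pp_pow, wlen_Pp]
    rw [this] at hlt
    nlinarith
  · rintro (rfl | hodd)
    · exact one_mem_compl
    · exact mem_compl_of_odd γ (Nat.odd_iff.mp hodd)

lemma part1 : {γ : D | ∃ σ τ : D,
    (∃ n : ℕ, 1 ≤ n ∧ FP.wlen (σ ^ n) < n) ∧
    (∃ n : ℕ, 1 ≤ n ∧ FP.wlen (τ ^ n) < n) ∧ γ = σ * τ} = Set.univ := by
  ext γ
  simp only [Set.mem_setOf_eq, Set.mem_univ, iff_true]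
  obtain ⟨i, hi⟩ := exists_rep γ
  rcases Nat.even_or_odd (FP.wlen γ) with he | ho
  · rcases Nat.eq_zero_or_pos (FP.wlen γ) with h0 | hpos
    · exact ⟨1, 1, one_mem_compl, one_mem_compl,
        by rw [hi, h0, Pp_zero, one_mul]⟩
    · -- even, positive: γ = Pp i (k+1) = Pp i 1 * Pp (!i) k with k odd
      obtain ⟨k, hk⟩ : ∃ k, FP.wlen γ = k + 1 := ⟨FP.wlen γ - 1, by omega⟩
      have hkodd : k % 2 = 1 := by
        rw [Nat.even_iff] at he; omega
      refine ⟨Pp i 1, Pp (!i) k, ?_, ?_, ?_⟩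
      · exact mem_compl_of_odd _ (by rw [wlen_Pp])
      · exact mem_compl_of_odd _ (by rw [wlen_Pp]; exact hkodd)
      · rw [hi, hk, Pp_cons]
  · exact ⟨γ, 1, mem_compl_of_odd γ (Nat.odd_iff.mp ho), one_mem_compl, (mul_one γ).symm⟩

end FPAux

/-- For the infinite dihedral group `D∞ = ℤ/2 * ℤ/2` one has `Sᶜ ⬝ Sᶜ = D∞`; indeed `Sᶜ`
consists exactly of the identity together with all elements of odd word length. -/
theorem FP.dihedral_S_compl_sq_eq_univ :
    (let D := CoprodI (fun _ : Bool => Multiplicative (ZMod 2))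
    {γ : D | ∃ σ τ : D,
        (∃ n : ℕ, 1 ≤ n ∧ FP.wlen (σ ^ n) < n) ∧
        (∃ n : ℕ, 1 ≤ n ∧ FP.wlen (τ ^ n) < n) ∧ γ = σ * τ} = Set.univ ∧
    {γ : D | ∃ n : ℕ, 1 ≤ n ∧ FP.wlen (γ ^ n) < n} =
      {1} ∪ {γ : D | Odd (FP.wlen γ)}) := by
  exact ⟨FPAux.part1, FPAux.part2⟩
end
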